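/- arXiv:1612.05213 — 4 statements merged into one kernel-verified Lean document; each statement's English description precedes it below -/
import Mathlib

section
/- Let π: Σ → T be a surjective monoid homomorphism between finite monoids and V a vector space. The synchrony subspace Syn_π ⊆ ⊕_{σ∈Σ} V, with the induced Σ-action (which factors through T), is isomorphic as a representation of T to the regular representation of T on ⊕_{τ∈T} V. -/
/-- The synchrony subspace of the regular representation of `M` associated to a
surjective monoid homomorphism `π : M →* T`. -/
def synSubmodule {M T : Type*} [Monoid M] [Monoid T]
    {V : Type*} [AddCommGroup V] [Module ℝ V] (π : M →* T) :
    Submodule ℝ (M → V) where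
  carrier := {X : M → V | ∀ σ σ' : M, π σ = π σ' → X σ = X σ'}
  add_mem' := fun {X Y} hX hY σ σ' h => by simp [hX σ σ' h, hY σ σ' h]
  zero_mem' := fun σ σ' _ => rfl
  smul_mem' := fun c X hX σ σ' h => by simp [hX σ σ' h]

/-- For a surjective monoid homomorphism `π : M →* T` between finite monoids, the
synchrony subspace `Syn_π ⊆ ⊕_{σ ∈ M} V`, with the induced action (which factors
through `T`), is isomorphic as a representation of `T` to the regular
representation of `T` on `⊕_{τ ∈ T} V`: there is a linear isomorphism
`e : Syn_π ≃ (T → V)` carrying the action `X ↦ (τ ↦ X (τ * σ))` on `Syn_π`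
to the regular `T`-action `Y ↦ (t ↦ Y (t * π σ))`. -/
theorem synchrony_space_iso_regular_rep {M T : Type*} [Monoid M] [Fintype M]
    [Monoid T] [Fintype T]
    {V : Type*} [AddCommGroup V] [Module ℝ V]
    (π : M →* T) (hsurj : Function.Surjective π) :
    ∃ e : (synSubmodule (V := V) π) ≃ₗ[ℝ] (T → V),
      ∀ (σ : M) (X : synSubmodule (V := V) π)
        (h : (fun τ : M => (X : M → V) (τ * σ)) ∈ synSubmodule (V := V) π)
        (t : T),
        e ⟨fun τ : M => (X : M → V) (τ * σ), h⟩ t = e X (t * π σ) := by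
  classical
  let s : T → M := Function.surjInv hsurj
  have hs : ∀ t, π (s t) = t := Function.surjInv_eq hsurj
  refine ⟨{ toFun := fun X t => (X : M → V) (s t)
            map_add' := fun X Y => rfl
            map_smul' := fun c X => rfl
            invFun := fun Y => ⟨fun m => Y (π m), fun σ σ' h => by simp [h]⟩
            left_inv := fun X => by
              ext m
              exact X.2 (s (π m)) m (hs (π m))
            right_inv := fun Y => by
              ext t
              simp [hs] }, ?_⟩
  intro σ X h t
  exact X.2 (s t * σ) (s (t * π σ)) (by simp [hs])
end

section
/- Let π: Σ → T be a surjective monoid homomorphism between finite monoids, with regular representations V^n of Σ and V^m ≅ Syn_π ⊆ V^n of T. For any T-equivariant linear map g: Syn_π → Syn_π there exists a Σ-equivariant linear map G: V^n → V^n with G|_{Syn_π} = g. -/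
/-- Extension lemma: for a surjective monoid homomorphism `π : M →* T` between
finite monoids, any equivariant linear map `g` of the synchrony space
`Syn_π = {X : X σ = X σ' whenever π σ = π σ'}` (identified with the regular
representation of `T`) into itself extends to an equivariant linear map `G` of the
whole regular representation of `M`. Here the regular action is
`(A_σ X) τ = X (τ * σ)`. -/
theorem equivariant_extension_from_synchrony_space {M T : Type*} [Monoid M] [Fintype M]
    [Monoid T] [Fintype T]
    {V : Type*} [AddCommGroup V] [Module ℝ V]
    (π : M →* T) (hsurj : Function.Surjective π)
    (A : M → ((M → V) →ₗ[ℝ] (M → V)))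
    (hA : ∀ (σ : M) (X : M → V) (τ : M), A σ X τ = X (τ * σ))
    (Syn : Set (M → V))
    (hSyn : Syn = {X : M → V | ∀ σ σ' : M, π σ = π σ' → X σ = X σ'})
    (g : (M → V) →ₗ[ℝ] (M → V))
    (hgSyn : ∀ X ∈ Syn, g X ∈ Syn)
    (hgequiv : ∀ σ : M, ∀ X ∈ Syn, g (A σ X) = A σ (g X)) :
    ∃ G : (M → V) →ₗ[ℝ] (M → V),
      (∀ (σ : M) (X : M → V), G (A σ X) = A σ (G X)) ∧
      (∀ X ∈ Syn, G X = g X) := by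
  classical
  -- section of π
  let s : T → M := Function.surjInv hsurj
  have hs : ∀ t, π (s t) = t := Function.surjInv_eq hsurj
  -- projection onto Syn
  let P : (M → V) →ₗ[ℝ] (M → V) := LinearMap.funLeft ℝ V (fun σ => s (π σ))
  have hP : ∀ X σ, P X σ = X (s (π σ)) := fun X σ => rfl
  have hPSyn : ∀ X, P X ∈ Syn := by
    intro X
    rw [hSyn]
    intro σ σ' h
    simp only [hP, h]
  have hPid : ∀ X ∈ Syn, P X = X := by
    intro X hX
    rw [hSyn] at hX
    funext σ
    exact hX _ _ (hs (π σ))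
  -- the extension
  refine ⟨LinearMap.pi (fun τ => (LinearMap.proj 1) ∘ₗ g ∘ₗ P ∘ₗ A τ), ?_, ?_⟩
  · intro σ X
    funext τ
    simp only [LinearMap.pi_apply, LinearMap.comp_apply, LinearMap.proj_apply]
    rw [hA σ]
    simp only [LinearMap.pi_apply, LinearMap.comp_apply, LinearMap.proj_apply]
    have h : A τ (A σ X) = A (τ * σ) X := by
      funext ρ
      rw [hA, hA, hA, mul_assoc]
    rw [h]
  · intro X hX
    funext τ
    simp only [LinearMap.pi_apply, LinearMap.comp_apply, LinearMap.proj_apply]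
    have hAX : A τ X ∈ Syn := by
      rw [hSyn]
      intro σ σ' h
      rw [hA, hA]
      rw [hSyn] at hX
      exact hX _ _ (by simp [map_mul, h])
    rw [hPid _ hAX, hgequiv τ X hX, hA]
    simp
end

section
/- Let V^n = ⊕_{i=1}^k W_i be a decomposition of the regular representation of a finite monoid Σ into Σ-invariant subspaces, and let π: Σ → T be a surjective monoid homomorphism with associated synchrony space Syn_π. Then Syn_π = ⊕_{i: W_i ∩ Syn_π ≠ 0} (W_i ∩ Syn_π) is a decomposition of Syn_π into invariant subspaces. -/
open DirectSum

set_option maxHeartbeats 1000000 in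
set_option synthInstance.maxHeartbeats 400000 in
/-- If `V^n = ⊕_{i=1}^k W_i` is a decomposition of the regular representation of a
finite monoid `M` into invariant subspaces, and `π : M →* T` is a surjective monoid
homomorphism with synchrony space `Syn_π`, then
`Syn_π = ⊕_{i : W_i ∩ Syn_π ≠ 0} (W_i ∩ Syn_π)` is a decomposition of `Syn_π` into
invariant subspaces. -/
theorem decomposition_intersects_synchrony_space {M T : Type*} [Monoid M] [Fintype M]
    [Monoid T] [Fintype T]
    {V : Type*} [AddCommGroup V] [Module ℝ V]
    (π : M →* T) (hsurj : Function.Surjective π)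
    (A : M → ((M → V) →ₗ[ℝ] (M → V)))
    (hA : ∀ (σ : M) (X : M → V) (τ : M), A σ X τ = X (τ * σ))
    (k : ℕ) (W : Fin k → Submodule ℝ (M → V))
    (hinternal : DirectSum.IsInternal W)
    (hinv : ∀ i, ∀ σ : M, ∀ X ∈ W i, A σ X ∈ W i) :
    (∀ i : Fin k, ∀ σ : M, ∀ X ∈ W i ⊓ synSubmodule (V := V) π,
        A σ X ∈ W i ⊓ synSubmodule (V := V) π) ∧
    iSupIndep (fun i : {i : Fin k // W i ⊓ synSubmodule (V := V) π ≠ ⊥} =>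
      W i ⊓ synSubmodule (V := V) π) ∧
    (⨆ i : {i : Fin k // W i ⊓ synSubmodule (V := V) π ≠ ⊥},
      W i ⊓ synSubmodule (V := V) π) = synSubmodule (V := V) π := by
  classical
  set S := synSubmodule (V := V) π with hS
  have hchar : ∀ x : M → V, x ∈ S ↔ ∀ σ σ' : M, π σ = π σ' → A σ x = A σ' x := by
    intro x
    constructor
    · intro hx σ σ' h
      funext τ
      rw [hA, hA]
      exact hx _ _ (by simp [map_mul, h])
    · intro h σ σ' hh
      have := congrFun (h σ σ' hh) 1
      rwa [hA, hA, one_mul, one_mul] at this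
  have hSynInv : ∀ σ : M, ∀ X ∈ S, A σ X ∈ S := by
    intro σ X hX τ τ' h
    rw [hA, hA]
    exact hX _ _ (by simp [map_mul, h])
  refine ⟨fun i σ X hX => ⟨hinv i σ X hX.1, hSynInv σ X hX.2⟩, ?_, ?_⟩
  · exact (hinternal.submodule_iSupIndep.comp
      (Subtype.val_injective (p := fun i => W i ⊓ S ≠ ⊥))).mono
      (fun i => inf_le_left)
  · apply le_antisymm
    · exact iSup_le fun i => inf_le_right
    · intro X hX
      let e : (⨁ i, W i) ≃ₗ[ℝ] (M → V) :=
        LinearEquiv.ofBijective (DirectSum.coeLinearMap W) hinternal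
      let c : (M → V) → Fin k → (M → V) := fun x i => (e.symm x i : M → V)
      have hc_mem : ∀ x i, c x i ∈ W i := fun x i => (e.symm x i).2
      have he : ∀ d : ⨁ i, W i, e d = DirectSum.coeLinearMap W d := fun _ => rfl
      -- every vector is the sum of its components
      have hsum : ∀ x : M → V, x = ∑ i, c x i := by
        intro x
        conv_lhs => rw [← e.apply_symm_apply x]
        rw [he, ← DirectSum.sum_univ_of (e.symm x), map_sum]
        exact Finset.sum_congr rfl fun i _ => DirectSum.coeLinearMap_of W i _
      -- the components commute with the representation
      have hF : ∀ σ : M, ∀ x : M → V, ∀ i, c (A σ x) i = A σ (c x i) := by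
        intro σ x i
        have h1 : A σ x = ∑ j, A σ (c x j) := by
          conv_lhs => rw [hsum x]
          rw [map_sum]
        show (e.symm (A σ x) i : M → V) = A σ (c x i)
        rw [h1, map_sum, DFinsupp.finset_sum_apply]
        rw [Finset.sum_eq_single i
          (fun j _ hj =>
            hinternal.ofBijective_coeLinearMap_of_mem_ne hj (hinv j σ _ (hc_mem x j)))
          (fun h => absurd (Finset.mem_univ i) h)]
        rw [hinternal.ofBijective_coeLinearMap_of_mem (hinv i σ _ (hc_mem x i))]
      -- components of synchronous vectors are synchronous
      have hcS : ∀ i, c X i ∈ S := by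
        intro i
        rw [hchar]
        intro σ σ' h
        rw [← hF σ X i, ← hF σ' X i, (hchar X).1 hX σ σ' h]
      rw [hsum X]
      apply Submodule.sum_mem
      intro i _
      by_cases hi : W i ⊓ S = ⊥
      · have h0 : c X i ∈ W i ⊓ S := ⟨hc_mem X i, hcS i⟩
        rw [hi, Submodule.mem_bot] at h0
        rw [h0]
        exact Submodule.zero_mem _
      · exact Submodule.mem_iSup_of_mem ⟨i, hi⟩ ⟨hc_mem X i, hcS i⟩
end

section
/- Let C be a finite set, Σ a finite submonoid of maps C → C, and B ⊆ C a block (σ(B) ⊆ B for all σ ∈ Σ). Suppose Σ is generated by a set Π, and there is a subset Θ ⊆ Π such that θ(B) = B for all θ ∈ Θ, and every point q ∈ C is mapped into B by some finite composition of elements of Θ. Then B is a projection block, i.e. there exists κ ∈ Σ with κ(C) = B and κ(B) = B. -/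
open scoped Pointwise

namespace Function.End

variable {C : Type*}

/-- `κ` is built point by point: the correction `m` sending the image of the next point into `B`
keeps the points already sent into `B` there. -/
theorem exists_forall_apply_mem_of_forall_exists [Finite C] (M : Submonoid (Function.End C))
    (B : Set C) (hM : ∀ m ∈ M, Set.MapsTo m B B) (hreach : ∀ q, ∃ m ∈ M, m q ∈ B) :
    ∃ κ ∈ M, ∀ q, κ q ∈ B := by
  classical
  have := Fintype.ofFinite C
  suffices h : ∀ A : Finset C, ∃ κ ∈ M, ∀ q ∈ A, κ q ∈ B by
    obtain ⟨κ, hκM, hκ⟩ := h Finset.univ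
    exact ⟨κ, hκM, fun q => hκ q (Finset.mem_univ q)⟩
  intro A
  induction A using Finset.induction with
  | empty => exact ⟨1, M.one_mem, by simp⟩
  | insert q A _ ih =>
    obtain ⟨κ, hκM, hκA⟩ := ih
    obtain ⟨m, hmM, hmq⟩ := hreach (κ q)
    refine ⟨m * κ, M.mul_mem hmM hκM, fun p hp => ?_⟩
    rcases Finset.mem_insert.mp hp with rfl | hpA
    · exact hmq
    · exact hM m hmM (hκA p hpA)

end Function.End

theorem projection_block_criterion_general {C : Type*} [Fintype C]
    (S : Submonoid (Function.End C)) (B : Set C)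
    (P : Set (Function.End C)) (hgen : Submonoid.closure P = S)
    (T : Set (Function.End C)) (hTP : T ⊆ P)
    (hTB : ∀ θ ∈ T, θ '' B = B)
    (hreach : ∀ q : C, ∃ L : List (Function.End C),
      (∀ θ ∈ L, θ ∈ T) ∧ L.prod q ∈ B) :
    ∃ κ ∈ S, κ '' Set.univ = B ∧ κ '' B = B := by
  -- for the pointwise action, `θ • B` is `θ '' B` by definition
  have hstab : Submonoid.closure T ≤ MulAction.stabilizerSubmonoid (Function.End C) B :=
    Submonoid.closure_le.mpr hTB
  have hmaps (m) (hm : m ∈ Submonoid.closure T) : Set.MapsTo m B B :=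
    Set.mapsTo_iff_image_subset.mpr (hstab hm).le
  obtain ⟨κ, hκT, hκB⟩ := Function.End.exists_forall_apply_mem_of_forall_exists
    (Submonoid.closure T) B hmaps fun q => by
      obtain ⟨L, hLT, hLq⟩ := hreach q
      exact ⟨L.prod, list_prod_mem fun θ hθ => Submonoid.subset_closure (hLT θ hθ), hLq⟩
  have hκ : κ '' B = B := hstab hκT
  refine ⟨κ, hgen ▸ Submonoid.closure_mono hTP hκT, ?_, hκ⟩
  refine (Set.image_subset_iff.mpr fun q _ => hκB q).antisymm ?_
  exact hκ ▸ Set.image_mono (Set.subset_univ B)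

/-- If `B` is a block for a finite monoid `S ⊆ C^C` generated by `Π`, and there is
a subset `Θ ⊆ Π` whose elements restrict to bijections of `B` (`θ(B) = B`) and whose
finite compositions map every point of `C` into `B`, then `B` is a projection
block: there exists `κ ∈ S` with `κ(C) = B` and `κ(B) = B`. -/
theorem projection_block_criterion {C : Type*} [Fintype C]
    (S : Submonoid (Function.End C)) (B : Set C)
    (hblock : ∀ σ ∈ S, σ '' B ⊆ B)
    (P : Set (Function.End C)) (hgen : Submonoid.closure P = S)
    (T : Set (Function.End C)) (hTP : T ⊆ P)
    (hTB : ∀ θ ∈ T, θ '' B = B)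
    (hreach : ∀ q : C, ∃ L : List (Function.End C),
      (∀ θ ∈ L, θ ∈ T) ∧ L.prod q ∈ B) :
    ∃ κ ∈ S, κ '' Set.univ = B ∧ κ '' B = B :=
  projection_block_criterion_general S B P hgen T hTP hTB hreach
end
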